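/- Let T be a rooted tree of depth at most ℓ+1 rooted at w, and run the bottom-up deletion process of the previous statement (CoreConstruct). If a node v is deleted in round i of CoreConstruct, then v is disabled by round i (i.e., becomes isolated within at most i rounds) of the peeling process applied to T. Consequently the degree of w after ℓ rounds of peeling is at most the number of surviving children of w in CoreConstruct. -/

import Mathlib

/-!
By induction on `i`: a node `v` without a descendant at depth `ℓ + 1` and with
`dep v ≥ ℓ + 1 - i` is isolated after `i` peeling rounds. Its children satisfy the same
hypotheses for `i - 1`, so after `i - 1` rounds they are isolated and `v` keeps at most its
parent edge, which the next round deletes. For the children of the root and `i = ℓ`, this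
leaves only edges to surviving children at the root.
-/

variable {V : Type*} [DecidableEq V] [Fintype V]

/-- degree of `v` in the graph with edge set `E` (edges are 2-element vertex sets) -/
def gdeg (E : Finset (Finset V)) (v : V) : ℕ := (E.filter (fun e => v ∈ e)).card

/-- one round of the peeling process: delete all edges incident to degree-1 nodes -/
def gpeel (E : Finset (Finset V)) : Finset (Finset V) :=
  E.filter (fun e => ∀ v ∈ e, gdeg E v ≠ 1)

/-- A node `v` of the tree with parent map `T` and depth function `dep` survives the
bottom-up deletion process `CoreConstruct` (with parameter `ℓ`) iff it has a descendant
at depth exactly `ℓ+1`. -/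
def Surv (T : V → V) (dep : V → ℕ) (ℓ : ℕ) (v : V) : Prop :=
  ∃ x, dep x = ℓ + 1 ∧ ∃ k, T^[k] x = v

def treeEdges (T : V → V) (w : V) : Finset (Finset V) :=
  Finset.image (fun u => {u, T u}) (Finset.univ.filter (· ≠ w))

lemma gpeel_subset (E : Finset (Finset V)) : gpeel E ⊆ E := Finset.filter_subset _ _

lemma iterate_gpeel_subset (E : Finset (Finset V)) (i : ℕ) : gpeel^[i] E ⊆ E := by
  induction i with
  | zero => exact subset_rfl
  | succ i ih =>
    rw [Function.iterate_succ_apply']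
    exact (gpeel_subset _).trans ih

omit [Fintype V] in
lemma gdeg_eq_zero_iff {E : Finset (Finset V)} {v : V} : gdeg E v = 0 ↔ ∀ e ∈ E, v ∉ e := by
  simp [gdeg, Finset.filter_eq_empty_iff]

omit [Fintype V] in
lemma gdeg_ne_zero_of_mem {E : Finset (Finset V)} {e : Finset V} {v : V} (he : e ∈ E)
    (hv : v ∈ e) : gdeg E v ≠ 0 :=
  fun h => gdeg_eq_zero_iff.1 h e he hv

lemma gdeg_gpeel_eq_zero_of_gdeg_le_one {E : Finset (Finset V)} {v : V} (h : gdeg E v ≤ 1) :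
    gdeg (gpeel E) v = 0 := by
  rw [gdeg_eq_zero_iff]
  intro e he hve
  obtain ⟨heE, hpeel⟩ := Finset.mem_filter.1 he
  exact hpeel v hve (le_antisymm h (Nat.one_le_iff_ne_zero.2 (gdeg_ne_zero_of_mem heE hve)))

section Tree

variable {T : V → V} {w : V}

lemma mem_treeEdges {e : Finset V} : e ∈ treeEdges T w ↔ ∃ u, u ≠ w ∧ {u, T u} = e := by
  simp [treeEdges]

lemma eq_parent_edge_or_child_edge {e : Finset V} {v : V} (he : e ∈ treeEdges T w)
    (hv : v ∈ e) : (v ≠ w ∧ e = {v, T v}) ∨ ∃ u, u ≠ w ∧ T u = v ∧ e = {u, v} := by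
  obtain ⟨u, hu, rfl⟩ := mem_treeEdges.1 he
  rcases Finset.mem_insert.1 hv with rfl | hv
  · exact Or.inl ⟨hu, rfl⟩
  · rw [Finset.mem_singleton] at hv
    exact Or.inr ⟨u, hu, hv.symm, by rw [hv]⟩

lemma gdeg_le_one_of_children_isolated {E : Finset (Finset V)} (hE : E ⊆ treeEdges T w)
    {v : V} (hchild : ∀ u, u ≠ w → T u = v → gdeg E u = 0) : gdeg E v ≤ 1 := by
  refine Finset.card_le_one.2 fun e he f hf => ?_
  suffices ∀ e ∈ E.filter (v ∈ ·), e = {v, T v} by rw [this e he, this f hf]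
  intro e he
  obtain ⟨heE, hve⟩ := Finset.mem_filter.1 he
  rcases eq_parent_edge_or_child_edge (hE heE) hve with ⟨-, rfl⟩ | ⟨u, hu, hTu, rfl⟩
  · rfl
  · exact absurd (hchild u hu hTu) (gdeg_ne_zero_of_mem heE (Finset.mem_insert_self u _))

lemma gdeg_root_le_ncard_active_children {E : Finset (Finset V)} (hE : E ⊆ treeEdges T w) :
    gdeg E w ≤ Set.ncard {u | u ≠ w ∧ T u = w ∧ gdeg E u ≠ 0} := by
  let active := Finset.univ.filter fun u => u ≠ w ∧ T u = w ∧ gdeg E u ≠ 0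
  have hcover : E.filter (w ∈ ·) ⊆ active.image fun u => {u, w} := by
    intro e he
    obtain ⟨heE, hwe⟩ := Finset.mem_filter.1 he
    rcases eq_parent_edge_or_child_edge (hE heE) hwe with ⟨hww, -⟩ | ⟨u, hu, hTu, rfl⟩
    · exact absurd rfl hww
    · exact Finset.mem_image_of_mem _ (Finset.mem_filter.2
        ⟨Finset.mem_univ u, hu, hTu, gdeg_ne_zero_of_mem heE (Finset.mem_insert_self u _)⟩)
  calc gdeg E w ≤ (active.image fun u => {u, w}).card := Finset.card_le_card hcover
    _ ≤ active.card := Finset.card_image_le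
    _ = _ := by rw [← Set.ncard_coe_finset]; simp [active]

omit [DecidableEq V] [Fintype V] in
lemma surv_of_child {dep : V → ℕ} {ℓ : ℕ} {u v : V} (hTu : T u = v) (hu : Surv T dep ℓ u) :
    Surv T dep ℓ v := by
  obtain ⟨x, hx, k, hk⟩ := hu
  exact ⟨x, hx, k + 1, by rw [Function.iterate_succ_apply', hk, hTu]⟩

/-- `CoreConstruct` deletes a node `v` without a descendant at depth `ℓ + 1` in round
`ℓ + 1 - dep v`. -/
lemma gdeg_iterate_gpeel_eq_zero_of_not_surv {dep : V → ℕ} {ℓ : ℕ}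
    (hdep : ∀ v, v ≠ w → dep (T v) + 1 = dep v) (hbound : ∀ v, dep v ≤ ℓ + 1) (i : ℕ) :
    ∀ v, ¬ Surv T dep ℓ v → ℓ + 1 - i ≤ dep v → gdeg (gpeel^[i] (treeEdges T w)) v = 0 := by
  induction i with
  | zero =>
    intro v hv hdv
    exact absurd ⟨v, le_antisymm (hbound v) hdv, 0, rfl⟩ hv
  | succ i ih =>
    intro v hv hdv
    rw [Function.iterate_succ_apply']
    refine gdeg_gpeel_eq_zero_of_gdeg_le_one
      (gdeg_le_one_of_children_isolated (iterate_gpeel_subset _ i) fun u hu hTu => ?_)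
    have hdu := hdep u hu
    rw [hTu] at hdu
    exact ih u (mt (surv_of_child hTu) hv) (by omega)

end Tree

theorem coreconstruct_upper_bound_general (T : V → V) (w : V) (dep : V → ℕ) (ℓ : ℕ)
    (hdepw : dep w = 0)
    (hdep : ∀ v, v ≠ w → dep (T v) + 1 = dep v)
    (hbound : ∀ v, dep v ≤ ℓ + 1) :
    (∀ v : V, v ≠ w → 1 ≤ dep v → dep v ≤ ℓ → ¬ Surv T dep ℓ v →
      gdeg (gpeel^[ℓ + 1 - dep v]
        (Finset.image (fun u => {u, T u}) (Finset.univ.filter (· ≠ w)))) v = 0) ∧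
    gdeg (gpeel^[ℓ]
        (Finset.image (fun u => {u, T u}) (Finset.univ.filter (· ≠ w)))) w
      ≤ Set.ncard {v : V | v ≠ w ∧ T v = w ∧ Surv T dep ℓ v} := by
  have isolated := gdeg_iterate_gpeel_eq_zero_of_not_surv hdep hbound
  refine ⟨fun v _ _ _ hv => isolated _ v hv (by omega), ?_⟩
  refine (gdeg_root_le_ncard_active_children (iterate_gpeel_subset _ ℓ)).trans
    (Set.ncard_le_ncard (fun u ⟨hu, hTu, hactive⟩ => ⟨hu, hTu, ?_⟩) (Set.toFinite _))
  by_contra hv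
  have hdu := hdep u hu
  rw [hTu, hdepw] at hdu
  exact hactive (isolated ℓ u hv (by omega))

/-- Upper bound of Lemma 6.2: in a rooted tree of depth at most `ℓ+1`, every node `v`
deleted in round `i = ℓ+1 - dep v` of `CoreConstruct` (i.e.\ a non-root node of depth in
`[1,ℓ]` with no descendant at depth `ℓ+1`) is disabled (isolated) within `i` rounds of
the peeling process; consequently the degree of the root `w` after `ℓ` rounds of peeling
is at most the number of children of `w` surviving `CoreConstruct`. -/
theorem coreconstruct_upper_bound (T : V → V) (w : V) (dep : V → ℕ) (ℓ : ℕ)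
    (hroot : T w = w) (hdepw : dep w = 0)
    (hdep : ∀ v, v ≠ w → dep (T v) + 1 = dep v)
    (hreach : ∀ v, T^[dep v] v = w)
    (hbound : ∀ v, dep v ≤ ℓ + 1) :
    (∀ v : V, v ≠ w → 1 ≤ dep v → dep v ≤ ℓ → ¬ Surv T dep ℓ v →
      gdeg (gpeel^[ℓ + 1 - dep v]
        (Finset.image (fun u => {u, T u}) (Finset.univ.filter (· ≠ w)))) v = 0) ∧
    gdeg (gpeel^[ℓ]
        (Finset.image (fun u => {u, T u}) (Finset.univ.filter (· ≠ w)))) w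
      ≤ Set.ncard {v : V | v ≠ w ∧ T v = w ∧ Surv T dep ℓ v} :=
  coreconstruct_upper_bound_general T w dep ℓ hdepw hdep hbound
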